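/- Let a symmetric matrix A have eigenvalues contained in [λmin, λmax] with 0 < λmin. The Chebyshev semi-iteration of degree m applied to the interval [λmin, λmax] reduces every error component with eigenvalue λ in that interval by a factor at most 1/T_m((λmax+λmin)/(λmax−λmin)), where T_m is the Chebyshev polynomial of the first kind; this bound is ≤ 2·ρᵐ/(1+ρ^{2m}) with ρ = (√κ̂ − 1)/(√κ̂ + 1), κ̂ = λmax/λmin. -/

import Mathlib

/-!
The affine map `λ ↦ (λmax + λmin - 2λ) / (λmax - λmin)` sends `[λmin, λmax]` onto `[-1, 1]`, where
`|T_m| ≤ 1`, and sends `0` to `(κ + 1) / (κ - 1) ≥ 1`, where `T_m ≥ 1`; this gives the first bound.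
For the second, `ρ` is chosen so that `(κ + 1) / (κ - 1) = (ρ + ρ⁻¹) / 2 = cosh (log ρ)`, and then
`T_m (cosh t) = cosh (m t)` gives `T_m ((κ + 1) / (κ - 1)) = (ρ ^ m + ρ⁻¹ ^ m) / 2`, so the second
bound is in fact an equality.
-/

open Polynomial Chebyshev Real Set

namespace Polynomial.Chebyshev

theorem eval_T_real_half_add_inv (n : ℤ) {x : ℝ} (hx : 0 < x) :
    (T ℝ n).eval ((x + x⁻¹) / 2) = (x ^ n + x⁻¹ ^ n) / 2 := by
  rw [← cosh_log hx, T_real_cosh, ← log_zpow, cosh_log (zpow_pos hx n), inv_zpow]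

theorem one_div_eval_T_real_half_add_inv (n : ℕ) {x : ℝ} (hx : 0 < x) :
    1 / (T ℝ n).eval ((x + x⁻¹) / 2) = 2 * x ^ n / (1 + x ^ (2 * n)) := by
  have hT := eval_T_real_half_add_inv n hx
  rw [zpow_natCast, zpow_natCast] at hT
  rw [hT, inv_pow, pow_mul']
  have hxn : x ^ n ≠ 0 := (pow_pos hx n).ne'
  field_simp
  ring

theorem abs_eval_T_real_div_le {n : ℤ} {y z : ℝ} (hy : |y| ≤ 1) (hz : 1 ≤ z) :
    |(T ℝ n).eval y / (T ℝ n).eval z| ≤ 1 / (T ℝ n).eval z := by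
  have hTz := one_le_eval_T_real n hz
  rw [abs_div, abs_of_pos (zero_lt_one.trans_le hTz)]
  gcongr
  exact abs_eval_T_real_le_one n hy

end Polynomial.Chebyshev

theorem abs_add_sub_two_mul_div_sub_le_one {a b x : ℝ} (hab : a < b) (hx : x ∈ Icc a b) :
    |(b + a - 2 * x) / (b - a)| ≤ 1 := by
  rw [abs_div, abs_of_pos (sub_pos.2 hab), div_le_one (sub_pos.2 hab), abs_le]
  obtain ⟨hax, hxb⟩ := hx
  constructor <;> linarith

theorem add_one_div_sub_one_eq_half_add_inv {κ : ℝ} (hκ : 1 < κ) :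
    (κ + 1) / (κ - 1) = ((√κ - 1) / (√κ + 1) + ((√κ - 1) / (√κ + 1))⁻¹) / 2 := by
  have hs : 1 < √κ := by rwa [lt_sqrt zero_le_one, one_pow]
  conv_lhs => rw [← sq_sqrt (zero_le_one.trans hκ.le)]
  have h1 : √κ - 1 ≠ 0 := by linarith
  have h2 : √κ ^ 2 - 1 ≠ 0 := by nlinarith
  rw [inv_div]
  field_simp
  ring

/-- Chebyshev semi-iteration error bound: on the spectral interval [λmin, λmax] the
normalized Chebyshev error polynomial is bounded by 1/T_m((κ+1)/(κ−1)), which in turn is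
bounded by 2ρᵐ/(1+ρ^{2m}) with ρ = (√κ−1)/(√κ+1), κ = λmax/λmin. -/
theorem stmt9 (m : ℕ) (lmin lmax : ℝ) (h0 : 0 < lmin) (hlt : lmin < lmax)
    (κ : ℝ) (hκ : κ = lmax / lmin)
    (ρ : ℝ) (hρ : ρ = (Real.sqrt κ - 1) / (Real.sqrt κ + 1))
    (pm : ℝ → ℝ)
    (hpm : ∀ lam : ℝ, pm lam =
      (Polynomial.Chebyshev.T ℝ m).eval ((lmax + lmin - 2 * lam) / (lmax - lmin)) /
      (Polynomial.Chebyshev.T ℝ m).eval ((lmax + lmin) / (lmax - lmin))) :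
    (∀ lam ∈ Set.Icc lmin lmax,
        |pm lam| ≤ 1 / (Polynomial.Chebyshev.T ℝ m).eval ((κ + 1) / (κ - 1))) ∧
    1 / (Polynomial.Chebyshev.T ℝ m).eval ((κ + 1) / (κ - 1)) ≤
      2 * ρ ^ m / (1 + ρ ^ (2 * m)) := by
  have hκ1 : 1 < κ := by rwa [hκ, one_lt_div h0]
  have hρ0 : 0 < ρ := by
    have hs : 1 < √κ := by rwa [lt_sqrt zero_le_one, one_pow]
    rw [hρ]
    exact div_pos (by linarith) (by linarith)
  have harg : (lmax + lmin) / (lmax - lmin) = (κ + 1) / (κ - 1) := by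
    rw [hκ]; field_simp
  refine ⟨fun lam hlam => ?_, ?_⟩
  · rw [hpm, harg]
    refine abs_eval_T_real_div_le (abs_add_sub_two_mul_div_sub_le_one hlt hlam) ?_
    rw [le_div_iff₀ (by linarith)]
    linarith
  · rw [add_one_div_sub_one_eq_half_add_inv hκ1, ← hρ, one_div_eval_T_real_half_add_inv m hρ0]
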